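/- (Gibbs property of weak limits.) Assume hypothesis (H2). Fix λ ∈ ℝ and for each n ≥ 1 let μ_{n,λ} be the probability measure on X with density exp(λ S_n f)/Z_n(λ) with respect to σ. If (N_j) is a strictly increasing sequence of integers such that μ_{N_j,λ} converges weakly to a Borel probability measure μ, then there exists a constant C ≥ 1 such that for all n ≥ 1 and all x ∈ X, C^{−1} · exp(λ S_n f(x))/(q^n Z_n(λ)) ≤ μ([x_0,…,x_{n−1}]) ≤ C · exp(λ S_n f(x))/(q^n Z_n(λ)). Consequently any two weak limit points of (μ_{n,λ}) are equivalent measures. -/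

import Mathlib

open MeasureTheory Filter Finset
open scoped ENNReal Topology

noncomputable section

/-- The shift map `T` on `ℕ → S`, `(Tx)_n = x_{n+1}`. -/
def shift {S : Type*} (x : ℕ → S) : ℕ → S := fun n => x (n + 1)

/-- The cylinder `[a_0, …, a_{m-1}]` of all `y` with `y_i = a_i` for `0 ≤ i < m`. -/
def cyl {S : Type*} {m : ℕ} (a : Fin m → S) : Set (ℕ → S) :=
  {y : ℕ → S | ∀ i : Fin m, y i = a i}

/-- The partial weighted Birkhoff sum `S_{m,n} f(x) = ∑_{k=m}^{n-1} f_k(T^k x)`. -/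
def birk {S : Type*} (f : ℕ → (ℕ → S) → ℝ) (m n : ℕ) (x : ℕ → S) : ℝ :=
  ∑ k ∈ Finset.Ico m n, f k (shift^[k] x)

/-- The partition function `Z_{m,n}(λ) = ∫ exp(λ S_{m,n}f) dσ`. -/
def Zmn {S : Type*} [MeasurableSpace S] (σ : Measure (ℕ → S))
    (f : ℕ → (ℕ → S) → ℝ) (lam : ℝ) (m n : ℕ) : ℝ :=
  ∫ x, Real.exp (lam * birk f m n x) ∂σ

/-- Hypothesis (H2): uniformly bounded distortion. -/
def H2 {S : Type*} (f : ℕ → (ℕ → S) → ℝ) (D : ℝ) : Prop :=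
  ∀ N : ℕ, 1 ≤ N → ∀ x y : ℕ → S, (∀ i, i < N → x i = y i) →
    ∑ k ∈ Finset.range N, |f k (shift^[k] x) - f k (shift^[k] y)| ≤ D

/-!
Write `K = exp(|λ| D)` and `[x]_n` for the cylinder of `x` of length `n`. By (H2), `exp(λ S_n f)`
varies by at most a factor `K` on `[x]_n`, and `S_m f = S_n f + S_{n,m} f` where `S_{n,m} f`
factors through `T^n`, which pushes `σ` restricted to `[x]_n` forward to `q^{-n} σ`. Hence
`∫_{[x]_n} exp(λ S_m f) dσ` equals `exp(λ S_n f(x)) q^{-n} Z_{n,m}` up to a factor `K`; summing over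
the cylinders of length `n` gives `Z_m ≈ Z_n Z_{n,m}` up to `K²`, so that
`μ_{m,λ}[x]_n ≈ exp(λ S_n f(x)) / (q^n Z_n)` up to `K³`, uniformly in `m ≥ n`. Cylinders are clopen,
so these bounds pass to weak limits. Two measures satisfying them are comparable on cylinders,
hence on open sets, hence, by outer regularity, on all Borel sets.
-/

section Cylinders

variable {S : Type*}

theorem shift_iterate_apply (k : ℕ) (x : ℕ → S) (j : ℕ) : shift^[k] x j = x (j + k) := by
  induction k generalizing x with
  | zero => rfl
  | succ k ih => rw [Function.iterate_succ_apply, ih]; simp [shift, Nat.add_assoc]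

theorem mem_cyl_self (x : ℕ → S) (n : ℕ) : x ∈ cyl fun i : Fin n => x i := fun _ => rfl

theorem cyl_eq_cylinder (x : ℕ → S) (n : ℕ) :
    (cyl fun i : Fin n => x i) = PiNat.cylinder x n := by
  ext y
  simp [cyl, PiNat.mem_cylinder_iff, Fin.forall_iff]

theorem cyl_eq_of_mem {n : ℕ} {a : Fin n → S} {x : ℕ → S} (hx : x ∈ cyl a) :
    cyl a = cyl fun i : Fin n => x i := by
  ext y
  exact forall_congr' fun i => by simp [hx i]

theorem pairwise_disjoint_cyl (n : ℕ) :
    Pairwise (Function.onFun Disjoint fun a : Fin n → S => cyl a) :=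
  fun _ _ hab => Set.disjoint_left.2 fun _ ha hb => hab (funext fun i => (ha i).symm.trans (hb i))

theorem iUnion_cyl (n : ℕ) : ⋃ a : Fin n → S, cyl a = Set.univ :=
  Set.eq_univ_of_forall fun y => Set.mem_iUnion.2 ⟨fun i => y i, fun _ => rfl⟩

theorem preimage_shift_iterate_cyl_inter_cyl {m n : ℕ} (a : Fin m → S) (b : Fin n → S) :
    shift^[n] ⁻¹' cyl a ∩ cyl b = cyl (Fin.append b a) := by
  ext y
  simp only [cyl, Set.mem_inter_iff, Set.mem_preimage, Set.mem_ofPred_eq, Fin.forall_fin_add,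
    Fin.append_left, Fin.append_right, shift_iterate_apply, Fin.val_castAdd, Fin.val_natAdd,
    Nat.add_comm, and_comm]

def cylinders (S : Type*) : Set (Set (ℕ → S)) := {s | ∃ (n : ℕ) (a : Fin n → S), s = cyl a}

theorem isPiSystem_cylinders : IsPiSystem (cylinders S) := by
  rintro _ ⟨n, a, rfl⟩ _ ⟨m, b, rfl⟩ ⟨y, hya, hyb⟩
  refine ⟨max n m, fun i => y i, ?_⟩
  rw [cyl_eq_of_mem hya, cyl_eq_of_mem hyb]
  ext z
  simp [cyl_eq_cylinder, PiNat.mem_cylinder_iff, or_imp, forall_and]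

theorem cyl_eq_iInter_preimage {n : ℕ} (a : Fin n → S) :
    cyl a = ⋂ i : Fin n, (fun y : ℕ → S => y i) ⁻¹' {a i} := by
  ext
  simp [cyl]

theorem measurableSet_cyl [MeasurableSpace S] [MeasurableSingletonClass S] {n : ℕ}
    (a : Fin n → S) : MeasurableSet (cyl a) := by
  rw [cyl_eq_iInter_preimage]
  exact .iInter fun i => measurable_pi_apply _ (measurableSet_singleton _)

theorem integral_eq_sum_integral_cyl [MeasurableSpace S] [MeasurableSingletonClass S] [Fintype S]
    {μ : Measure (ℕ → S)} {g : (ℕ → S) → ℝ} (hg : Integrable g μ) (n : ℕ) :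
    ∫ y, g y ∂μ = ∑ a : Fin n → S, ∫ y in cyl a, g y ∂μ := by
  rw [← setIntegral_univ, ← iUnion_cyl n]
  exact integral_iUnion_fintype measurableSet_cyl (pairwise_disjoint_cyl n) fun _ => hg.integrableOn

theorem nonempty_of_isProbabilityMeasure_pi [MeasurableSpace S] (σ : Measure (ℕ → S))
    [IsProbabilityMeasure σ] : Nonempty S :=
  ⟨(nonempty_of_isProbabilityMeasure σ).some 0⟩

variable [TopologicalSpace S]

theorem continuous_shift_iterate (k : ℕ) : Continuous (shift^[k] : (ℕ → S) → ℕ → S) :=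
  continuous_pi fun j => by simpa only [shift_iterate_apply] using continuous_apply (j + k)

variable [DiscreteTopology S]

theorem isClopen_cyl {n : ℕ} (a : Fin n → S) : IsClopen (cyl a) := by
  rw [cyl_eq_iInter_preimage]
  exact isClopen_iInter_of_finite fun i => (isClopen_discrete _).preimage (continuous_apply _)

theorem generateFrom_cylinders [Countable S] [MeasurableSpace S] [BorelSpace S] :
    (inferInstance : MeasurableSpace (ℕ → S)) = .generateFrom (cylinders S) := by
  refine le_antisymm ?_ (MeasurableSpace.generateFrom_le ?_)
  · rw [BorelSpace.measurable_eq (α := ℕ → S),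
      (PiNat.isTopologicalBasis_cylinders fun _ => S).borel_eq_generateFrom]
    exact MeasurableSpace.generateFrom_mono fun _ ⟨x, n, h⟩ =>
      ⟨n, _, h.trans (cyl_eq_cylinder x n).symm⟩
  · rintro _ ⟨n, a, rfl⟩
    exact measurableSet_cyl a

end Cylinders

section Bernoulli

variable {S : Type*} [Fintype S] [TopologicalSpace S] [DiscreteTopology S] [MeasurableSpace S]
  [BorelSpace S] {σ : Measure (ℕ → S)} [IsProbabilityMeasure σ]

theorem measurable_shift_iterate (n : ℕ) : Measurable (shift^[n] : (ℕ → S) → ℕ → S) :=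
  (continuous_shift_iterate n).measurable

variable (hσ : ∀ (m : ℕ) (a : Fin m → S), σ (cyl a) = (Fintype.card S : ℝ≥0∞)⁻¹ ^ m)
include hσ

theorem map_shift_iterate_restrict_cyl {n : ℕ} (b : Fin n → S) :
    (σ.restrict (cyl b)).map shift^[n] = (Fintype.card S : ℝ≥0∞)⁻¹ ^ n • σ := by
  have hT := measurable_shift_iterate (S := S) n
  refine ext_of_generate_finite _ generateFrom_cylinders isPiSystem_cylinders ?_ ?_
  · rintro _ ⟨m, a, rfl⟩
    rw [Measure.map_apply hT (measurableSet_cyl a),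
      Measure.restrict_apply (hT (measurableSet_cyl a)), preimage_shift_iterate_cyl_inter_cyl,
      Measure.smul_apply, hσ, hσ, smul_eq_mul, pow_add]
  · rw [Measure.map_apply hT .univ, Set.preimage_univ, Measure.restrict_apply_univ,
      Measure.smul_apply, hσ, measure_univ, smul_eq_mul, mul_one]

theorem map_shift_iterate (n : ℕ) : σ.map shift^[n] = σ := by
  have hσ_sum : σ = Measure.sum fun b : Fin n → S => σ.restrict (cyl b) := by
    rw [← Measure.restrict_iUnion (pairwise_disjoint_cyl n) measurableSet_cyl, iUnion_cyl,
      Measure.restrict_univ]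
  have := nonempty_of_isProbabilityMeasure_pi σ
  have hq : (Fintype.card S : ℝ≥0∞) ≠ 0 := by simp
  conv_lhs => rw [hσ_sum]
  rw [Measure.map_sum (measurable_shift_iterate n).aemeasurable, Measure.sum_fintype]
  simp only [map_shift_iterate_restrict_cyl hσ, Finset.sum_const, Finset.card_univ,
    Fintype.card_fun, Fintype.card_fin, ← Nat.cast_smul_eq_nsmul ℝ≥0∞, smul_smul, Nat.cast_pow,
    ← mul_pow, ENNReal.mul_inv_cancel hq (ENNReal.natCast_ne_top _), one_pow, one_smul]

theorem setIntegral_cyl_comp_shift_iterate {n : ℕ} (b : Fin n → S) {G : (ℕ → S) → ℝ}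
    (hG : Measurable G) :
    ∫ y in cyl b, G (shift^[n] y) ∂σ = (Fintype.card S : ℝ)⁻¹ ^ n * ∫ y, G (shift^[n] y) ∂σ := by
  have hT := measurable_shift_iterate (S := S) n
  rw [← integral_map hT.aemeasurable hG.aestronglyMeasurable,
    ← integral_map hT.aemeasurable hG.aestronglyMeasurable,
    map_shift_iterate_restrict_cyl hσ, map_shift_iterate hσ, integral_smul_measure]
  simp

end Bernoulli

def WithinFactor (c a b : ℝ) : Prop := a ≤ c * b ∧ b ≤ c * a

namespace WithinFactor

variable {c d a b e : ℝ}

theorem symm (h : WithinFactor c a b) : WithinFactor c b a := And.symm h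

theorem trans (h : WithinFactor c a b) (h' : WithinFactor d b e) (hc : 0 ≤ c) (hd : 0 ≤ d) :
    WithinFactor (c * d) a e :=
  ⟨h.1.trans (by rw [mul_assoc]; exact mul_le_mul_of_nonneg_left h'.1 hc),
    h'.2.trans (by rw [mul_comm c, mul_assoc]; exact mul_le_mul_of_nonneg_left h.2 hd)⟩

theorem mul_right (h : WithinFactor c a b) {t : ℝ} (ht : 0 ≤ t) : WithinFactor c (a * t) (b * t) :=
  ⟨(mul_le_mul_of_nonneg_right h.1 ht).trans_eq (mul_assoc _ _ _),
    (mul_le_mul_of_nonneg_right h.2 ht).trans_eq (mul_assoc _ _ _)⟩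

private theorem div_le_mul_div {a' b' : ℝ} (h : a ≤ c * b) (h' : b' ≤ d * a') (ha : 0 ≤ a)
    (ha' : 0 < a') (hb' : 0 < b') : a / a' ≤ c * d * (b / b') := by
  rw [div_le_iff₀ ha']
  calc a ≤ c * b * (b' / b') := by rw [div_self hb'.ne', mul_one]; exact h
    _ ≤ c * b * (d * a' / b') :=
      mul_le_mul_of_nonneg_left (div_le_div_of_nonneg_right h' hb'.le) (ha.trans h)
    _ = c * d * (b / b') * a' := by ring

theorem div {a' b' : ℝ} (h : WithinFactor c a b) (h' : WithinFactor d a' b') (ha : 0 ≤ a)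
    (hb : 0 ≤ b) (ha' : 0 < a') (hb' : 0 < b') : WithinFactor (c * d) (a / a') (b / b') :=
  ⟨div_le_mul_div h.1 h'.2 ha ha' hb', div_le_mul_div h.2 h'.1 hb hb' ha'⟩

theorem sum {ι : Type*} (s : Finset ι) {a b : ι → ℝ} (h : ∀ i ∈ s, WithinFactor c (a i) (b i)) :
    WithinFactor c (∑ i ∈ s, a i) (∑ i ∈ s, b i) := by
  simp only [WithinFactor, Finset.mul_sum]
  exact ⟨Finset.sum_le_sum fun i hi => (h i hi).1, Finset.sum_le_sum fun i hi => (h i hi).2⟩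

theorem setIntegral {X : Type*} [MeasurableSpace X] {μ : Measure X} {s : Set X} {F G : X → ℝ}
    (hs : MeasurableSet s) (hF : IntegrableOn F s μ) (hG : IntegrableOn G s μ)
    (h : ∀ y ∈ s, WithinFactor c (F y) (G y)) :
    WithinFactor c (∫ y in s, F y ∂μ) (∫ y in s, G y ∂μ) := by
  simp only [WithinFactor, ← integral_const_mul]
  exact ⟨setIntegral_mono_on hF (hG.const_mul c) hs fun y hy => (h y hy).1,
    setIntegral_mono_on hG (hF.const_mul c) hs fun y hy => (h y hy).2⟩

theorem of_tendsto {ι : Type*} {l : Filter ι} [l.NeBot] {u : ι → ℝ} (hu : Tendsto u l (𝓝 a))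
    (h : ∀ᶠ j in l, WithinFactor c (u j) b) : WithinFactor c a b :=
  ⟨le_of_tendsto hu (h.mono fun _ hj => hj.1),
    ge_of_tendsto (hu.const_mul c) (h.mono fun _ hj => hj.2)⟩

theorem inv_mul_le (h : WithinFactor c a b) (hc : 0 < c) : c⁻¹ * b ≤ a := by
  rw [inv_mul_le_iff₀ hc]
  exact h.2

theorem exp_of_abs_sub_le {u v : ℝ} (h : |u - v| ≤ c) :
    WithinFactor (Real.exp c) (Real.exp u) (Real.exp v) := by
  simp only [WithinFactor, ← Real.exp_add, Real.exp_le_exp]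
  constructor <;> linarith [abs_le.1 h]

end WithinFactor

section BirkhoffSums

variable {S : Type*} {f : ℕ → (ℕ → S) → ℝ}

theorem birk_add_birk {l n m : ℕ} (hln : l ≤ n) (hnm : n ≤ m) (x : ℕ → S) :
    birk f l n x + birk f n m x = birk f l m x :=
  Finset.sum_Ico_consecutive _ hln hnm

theorem birk_eq_birk_shift_iterate (n m : ℕ) (x : ℕ → S) :
    birk f n m x = birk (fun k => f (n + k)) 0 (m - n) (shift^[n] x) := by
  simp only [birk, Finset.sum_Ico_eq_sum_range, ← Finset.range_eq_Ico,
    ← Function.iterate_add_apply, Nat.add_comm]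

theorem H2.nonneg {D : ℝ} [Nonempty S] (h : H2 f D) : 0 ≤ D := by
  simpa using h 1 le_rfl (fun _ => Classical.arbitrary S) _ fun _ _ => rfl

theorem H2.abs_birk_sub_le {D : ℝ} (h : H2 f D) {n : ℕ} (hn : 1 ≤ n) {a : Fin n → S}
    {x y : ℕ → S} (hx : x ∈ cyl a) (hy : y ∈ cyl a) : |birk f 0 n x - birk f 0 n y| ≤ D := by
  rw [birk, birk, ← Finset.sum_sub_distrib, ← Finset.range_eq_Ico]
  exact (Finset.abs_sum_le_sum_abs _ _).trans
    (h n hn x y fun i hi => (hx ⟨i, hi⟩).trans (hy ⟨i, hi⟩).symm)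

theorem H2.withinFactor_exp_birk {D : ℝ} (h : H2 f D) (lam : ℝ) {n : ℕ} (hn : 1 ≤ n)
    {a : Fin n → S} {x y : ℕ → S} (hx : x ∈ cyl a) (hy : y ∈ cyl a) :
    WithinFactor (Real.exp (|lam| * D)) (Real.exp (lam * birk f 0 n x))
      (Real.exp (lam * birk f 0 n y)) :=
  .exp_of_abs_sub_le <| by
    rw [← mul_sub, abs_mul]
    exact mul_le_mul_of_nonneg_left (h.abs_birk_sub_le hn hx hy) (abs_nonneg lam)

theorem Zmn_self [MeasurableSpace S] (σ : Measure (ℕ → S)) [IsProbabilityMeasure σ] (lam : ℝ)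
    (n : ℕ) : Zmn σ f lam n n = 1 := by
  simp [Zmn, birk]

variable [TopologicalSpace S] (hfc : ∀ n, Continuous (f n))
include hfc

theorem continuous_birk (m n : ℕ) : Continuous (birk f m n) :=
  continuous_finsetSum _ fun k _ => (hfc k).comp (continuous_shift_iterate k)

variable [Finite S] [DiscreteTopology S] [MeasurableSpace S] [BorelSpace S]

theorem integrable_exp_birk (μ : Measure (ℕ → S)) [IsFiniteMeasure μ] (lam : ℝ) (m n : ℕ) :
    Integrable (fun x => Real.exp (lam * birk f m n x)) μ :=
  (Real.continuous_exp.comp (continuous_const.mul (continuous_birk hfc m n)))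
    |>.integrable_of_hasCompactSupport (.of_compactSpace _)

variable {σ : Measure (ℕ → S)} [IsProbabilityMeasure σ]

theorem Zmn_pos (lam : ℝ) (m n : ℕ) : 0 < Zmn σ f lam m n :=
  integral_exp_pos (integrable_exp_birk hfc σ lam m n)

end BirkhoffSums

section GibbsEstimates

/-- The measure `μ_{n,λ}` of the paper. -/
def gibbsMeasure {S : Type*} [MeasurableSpace S] (σ : Measure (ℕ → S)) (f : ℕ → (ℕ → S) → ℝ)
    (lam : ℝ) (n : ℕ) : Measure (ℕ → S) :=
  σ.withDensity fun x => ENNReal.ofReal (Real.exp (lam * birk f 0 n x) / Zmn σ f lam 0 n)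

variable {S : Type*} [Fintype S] [TopologicalSpace S] [DiscreteTopology S] [MeasurableSpace S]
  [BorelSpace S] {σ : Measure (ℕ → S)} [IsProbabilityMeasure σ] {f : ℕ → (ℕ → S) → ℝ}
  (hfc : ∀ n, Continuous (f n)) (lam : ℝ)
include hfc

theorem gibbsMeasure_apply_toReal (m : ℕ) {s : Set (ℕ → S)} (hs : MeasurableSet s) :
    (gibbsMeasure σ f lam m s).toReal
      = (∫ y in s, Real.exp (lam * birk f 0 m y) ∂σ) / Zmn σ f lam 0 m := by
  have hρ : 0 ≤ᵐ[σ.restrict s] fun y => Real.exp (lam * birk f 0 m y) / Zmn σ f lam 0 m :=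
    .of_forall fun y => div_nonneg (Real.exp_pos _).le (Zmn_pos hfc lam 0 m).le
  rw [gibbsMeasure, withDensity_apply _ hs, ← ofReal_integral_eq_lintegral_ofReal
    ((integrable_exp_birk hfc σ lam 0 m).div_const _).restrict hρ,
    ENNReal.toReal_ofReal (integral_nonneg_of_ae hρ), integral_div]

variable (hσ : ∀ (m : ℕ) (a : Fin m → S), σ (cyl a) = (Fintype.card S : ℝ≥0∞)⁻¹ ^ m)
include hσ

theorem setIntegral_cyl_exp_birk {n : ℕ} (b : Fin n → S) (m : ℕ) :
    ∫ y in cyl b, Real.exp (lam * birk f n m y) ∂σ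
      = (Fintype.card S : ℝ)⁻¹ ^ n * Zmn σ f lam n m := by
  have hG : Measurable fun z => Real.exp (lam * birk (fun k => f (n + k)) 0 (m - n) z) :=
    (Real.continuous_exp.comp
      (continuous_const.mul (continuous_birk (fun k => hfc (n + k)) 0 (m - n)))).measurable
  simpa only [Zmn, ← birk_eq_birk_shift_iterate] using setIntegral_cyl_comp_shift_iterate hσ b hG

variable {D : ℝ} (hH2 : H2 f D)
include hH2

theorem withinFactor_setIntegral_cyl_exp_birk {n m : ℕ} (hn : 1 ≤ n) (hnm : n ≤ m)
    {a : Fin n → S} {x : ℕ → S} (hx : x ∈ cyl a) :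
    WithinFactor (Real.exp (|lam| * D)) (∫ y in cyl a, Real.exp (lam * birk f 0 m y) ∂σ)
      (Real.exp (lam * birk f 0 n x) * ((Fintype.card S : ℝ)⁻¹ ^ n * Zmn σ f lam n m)) := by
  rw [← setIntegral_cyl_exp_birk hfc lam hσ a m, ← integral_const_mul]
  refine .setIntegral (measurableSet_cyl a) (integrable_exp_birk hfc σ lam 0 m).integrableOn
    ((integrable_exp_birk hfc σ lam n m).const_mul _).integrableOn fun y hy => ?_
  rw [← birk_add_birk (Nat.zero_le n) hnm, mul_add, Real.exp_add]
  exact (hH2.withinFactor_exp_birk lam hn hy hx).mul_right (Real.exp_pos _).le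

theorem withinFactor_Zmn_mul {n m : ℕ} (hn : 1 ≤ n) (hnm : n ≤ m) :
    WithinFactor (Real.exp (|lam| * D) * Real.exp (|lam| * D)) (Zmn σ f lam 0 m)
      (Zmn σ f lam 0 n * Zmn σ f lam n m) := by
  have hZ (k : ℕ) :
      Zmn σ f lam 0 k = ∑ a : Fin n → S, ∫ y in cyl a, Real.exp (lam * birk f 0 k y) ∂σ :=
    integral_eq_sum_integral_cyl (integrable_exp_birk hfc σ lam 0 k) n
  rw [hZ m, hZ n, Finset.sum_mul]
  refine .sum _ fun a _ => ?_
  obtain ha | ⟨x, hx⟩ := (cyl a).eq_empty_or_nonempty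
  · simp [ha, WithinFactor]
  -- Both sides are compared with `exp(λ S_n f(x)) q⁻ⁿ Z_{n,m}`; for the right one this is
  -- the case `m = n`, as `Z_{n,n} = 1`.
  have h_n := withinFactor_setIntegral_cyl_exp_birk hfc lam hσ hH2 hn le_rfl hx
  rw [Zmn_self, mul_one] at h_n
  have h_m := withinFactor_setIntegral_cyl_exp_birk hfc lam hσ hH2 hn hnm hx
  rw [← mul_assoc] at h_m
  exact h_m.trans (h_n.mul_right (Zmn_pos hfc lam n m).le).symm (Real.exp_pos _).le
    (Real.exp_pos _).le

theorem withinFactor_gibbsMeasure_cyl {n m : ℕ} (hn : 1 ≤ n) (hnm : n ≤ m) (x : ℕ → S) :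
    WithinFactor (Real.exp (|lam| * D) * (Real.exp (|lam| * D) * Real.exp (|lam| * D)))
      (gibbsMeasure σ f lam m (cyl fun i : Fin n => x i)).toReal
      (Real.exp (lam * birk f 0 n x) / ((Fintype.card S : ℝ) ^ n * Zmn σ f lam 0 n)) := by
  have hZ := Zmn_pos hfc (σ := σ) lam
  have h := (withinFactor_setIntegral_cyl_exp_birk hfc lam hσ hH2 hn hnm (mem_cyl_self x n)).div
    (withinFactor_Zmn_mul hfc lam hσ hH2 hn hnm)
    (setIntegral_nonneg (measurableSet_cyl _) fun y _ => (Real.exp_pos _).le)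
    (mul_nonneg (Real.exp_pos _).le (mul_nonneg (by positivity) (hZ n m).le))
    (hZ 0 m) (mul_pos (hZ 0 n) (hZ n m))
  rw [gibbsMeasure_apply_toReal hfc lam m (measurableSet_cyl _)]
  convert h using 1
  rw [← mul_assoc, mul_div_mul_right _ _ (hZ n m).ne', inv_pow, ← div_eq_mul_inv, div_div]

end GibbsEstimates

section WeakLimits

variable {S : Type*} [Fintype S] [TopologicalSpace S] [DiscreteTopology S] [MeasurableSpace S]
  [BorelSpace S]

theorem integral_indicator_cyl (ν : Measure (ℕ → S)) {n : ℕ} (a : Fin n → S) :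
    ∫ y, BoundedContinuousFunction.indicator (cyl a) (isClopen_cyl a) y ∂ν = (ν (cyl a)).toReal :=
  integral_indicator_one (measurableSet_cyl a)

theorem withinFactor_measure_cyl_of_tendsto {σ : Measure (ℕ → S)} [IsProbabilityMeasure σ]
    (hσ : ∀ (m : ℕ) (a : Fin m → S), σ (cyl a) = (Fintype.card S : ℝ≥0∞)⁻¹ ^ m)
    {f : ℕ → (ℕ → S) → ℝ} (hfc : ∀ n, Continuous (f n)) {D : ℝ} (hH2 : H2 f D) (lam : ℝ)
    {N : ℕ → ℕ} (hN : StrictMono N) {μ : Measure (ℕ → S)}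
    (hlim : ∀ g : BoundedContinuousFunction (ℕ → S) ℝ,
      Tendsto (fun j => ∫ x, g x ∂gibbsMeasure σ f lam (N j)) atTop (𝓝 (∫ x, g x ∂μ)))
    (n : ℕ) (hn : 1 ≤ n) (x : ℕ → S) :
    WithinFactor (Real.exp (|lam| * D) * (Real.exp (|lam| * D) * Real.exp (|lam| * D)))
      (μ (cyl fun i : Fin n => x i)).toReal
      (Real.exp (lam * birk f 0 n x) / ((Fintype.card S : ℝ) ^ n * Zmn σ f lam 0 n)) := by
  have h := hlim (BoundedContinuousFunction.indicator _ (isClopen_cyl fun i : Fin n => x i))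
  simp only [integral_indicator_cyl] at h
  exact .of_tendsto h (eventually_atTop.2 ⟨n, fun j hj =>
    withinFactor_gibbsMeasure_cyl hfc lam hσ hH2 hn (hj.trans hN.le_apply) x⟩)

end WeakLimits

section Equivalence

theorem le_of_forall_isOpen_measure_le {X : Type*} [TopologicalSpace X] [MeasurableSpace X]
    {μ ν : Measure X} [ν.OuterRegular] (h : ∀ U, IsOpen U → μ U ≤ ν U) : μ ≤ ν := by
  refine Measure.le_iff'.2 fun A => ENNReal.le_of_forall_pos_le_add fun ε hε _ => ?_
  obtain ⟨U, hAU, hU, hνU⟩ := A.exists_isOpen_le_add ν (ENNReal.coe_ne_zero.2 hε.ne')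
  exact (measure_mono hAU).trans ((h U hU).trans hνU)

variable {S : Type*} [Fintype S] [TopologicalSpace S] [DiscreteTopology S] [MeasurableSpace S]
  [BorelSpace S]

theorem measure_isOpen_le_of_forall_cyl_le {μ ν : Measure (ℕ → S)}
    (h : ∀ n (a : Fin (n + 1) → S), μ (cyl a) ≤ ν (cyl a)) {U : Set (ℕ → S)} (hU : IsOpen U) :
    μ U ≤ ν U := by
  classical
  let s : ℕ → Set (ℕ → S) := fun j => ⋃ a ∈ ({a | cyl a ⊆ U} : Finset (Fin (j + 1) → S)), cyl a
  have hs_mono : Monotone s := by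
    refine monotone_nat_of_le_succ fun j y hy => ?_
    simp only [s, Set.mem_iUnion, Finset.mem_filter, Finset.mem_univ, true_and] at hy ⊢
    obtain ⟨a, haU, hya⟩ := hy
    refine ⟨fun i => y i, ?_, mem_cyl_self y _⟩
    rw [cyl_eq_of_mem hya, cyl_eq_cylinder] at haU
    rw [cyl_eq_cylinder]
    exact (PiNat.cylinder_anti y (Nat.le_succ _)).trans haU
  have hs_iUnion : ⋃ j, s j = U := by
    refine (Set.iUnion_subset fun j => ?_).antisymm fun y hy => ?_
    · simp only [s, Set.iUnion_subset_iff, Finset.mem_filter, Finset.mem_univ, true_and]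
      exact fun a ha => ha
    obtain ⟨_, ⟨x, n, rfl⟩, hy', hxU⟩ :=
      (PiNat.isTopologicalBasis_cylinders fun _ => S).exists_subset_of_mem_open hy hU
    rw [← PiNat.mem_cylinder_iff_eq.1 hy'] at hxU
    refine Set.mem_iUnion.2 ⟨n, Set.mem_iUnion₂.2 ⟨fun i => y i,
      Finset.mem_filter.2 ⟨Finset.mem_univ _, ?_⟩, mem_cyl_self y _⟩⟩
    rw [cyl_eq_cylinder]
    exact (PiNat.cylinder_anti y n.le_succ).trans hxU
  have hs_le (j : ℕ) : μ (s j) ≤ ν (s j) := by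
    have hd := (pairwise_disjoint_cyl (S := S) (j + 1)).set_pairwise
    rw [measure_biUnion_finset (hd _) fun a _ => measurableSet_cyl a,
      measure_biUnion_finset (hd _) fun a _ => measurableSet_cyl a]
    exact Finset.sum_le_sum fun a _ => h j a
  rw [← hs_iUnion, hs_mono.measure_iUnion, hs_mono.measure_iUnion]
  exact iSup_mono hs_le

theorem absolutelyContinuous_of_withinFactor_cyl {μ μ' : Measure (ℕ → S)} [IsFiniteMeasure μ]
    [IsFiniteMeasure μ'] {C : ℝ} (hC : 0 ≤ C) (ρ : ℕ → (ℕ → S) → ℝ)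
    (hμ : ∀ n, 1 ≤ n → ∀ x, WithinFactor C (μ (cyl fun i : Fin n => x i)).toReal (ρ n x))
    (hμ' : ∀ n, 1 ≤ n → ∀ x, WithinFactor C (μ' (cyl fun i : Fin n => x i)).toReal (ρ n x)) :
    μ ≪ μ' := by
  refine Measure.absolutelyContinuous_of_le_smul (c := ENNReal.ofReal (C * C))
    (le_of_forall_isOpen_measure_le (ν := (C * C).toNNReal • μ') fun U hU =>
      measure_isOpen_le_of_forall_cyl_le (fun n a => ?_) hU)
  obtain ha | ⟨x, hx⟩ := (cyl a).eq_empty_or_nonempty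
  · simp [ha]
  rw [cyl_eq_of_mem hx, Measure.smul_apply, ENNReal.smul_def, smul_eq_mul, ← ENNReal.ofReal,
    ← ENNReal.ofReal_toReal (measure_ne_top μ' _), ← ENNReal.ofReal_mul (mul_nonneg hC hC),
    ENNReal.le_ofReal_iff_toReal_le (measure_ne_top μ _) (by positivity)]
  exact ((hμ _ n.succ_pos x).trans (hμ' _ n.succ_pos x).symm hC hC).1

end Equivalence

theorem gibbs_property_of_weak_limits_general {S : Type*} [Fintype S] [TopologicalSpace S]
    [DiscreteTopology S] [MeasurableSpace S] [BorelSpace S]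
    (σ : Measure (ℕ → S)) [IsProbabilityMeasure σ]
    (hσ : ∀ (m : ℕ) (a : Fin m → S), σ (cyl a) = (Fintype.card S : ℝ≥0∞)⁻¹ ^ m)
    (f : ℕ → (ℕ → S) → ℝ) (hfc : ∀ n, Continuous (f n))
    (D : ℝ) (hH2 : H2 f D) (lam : ℝ)
    (N : ℕ → ℕ) (hN : StrictMono N)
    (μ : Measure (ℕ → S)) [IsProbabilityMeasure μ]
    (hlim : ∀ g : BoundedContinuousFunction (ℕ → S) ℝ,
      Tendsto (fun j => ∫ x, g x
          ∂(σ.withDensity fun x =>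
              ENNReal.ofReal (Real.exp (lam * birk f 0 (N j) x) / Zmn σ f lam 0 (N j))))
        atTop (𝓝 (∫ x, g x ∂μ))) :
    (∃ C : ℝ, 1 ≤ C ∧ ∀ n : ℕ, 1 ≤ n → ∀ x : ℕ → S,
      C⁻¹ * (Real.exp (lam * birk f 0 n x) / ((Fintype.card S : ℝ) ^ n * Zmn σ f lam 0 n))
          ≤ (μ (cyl fun i : Fin n => x i)).toReal ∧
      (μ (cyl fun i : Fin n => x i)).toReal
          ≤ C * (Real.exp (lam * birk f 0 n x) / ((Fintype.card S : ℝ) ^ n * Zmn σ f lam 0 n))) ∧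
    (∀ (μ' : Measure (ℕ → S)), IsProbabilityMeasure μ' → ∀ N' : ℕ → ℕ, StrictMono N' →
      (∀ g : BoundedContinuousFunction (ℕ → S) ℝ,
        Tendsto (fun j => ∫ x, g x
            ∂(σ.withDensity fun x =>
                ENNReal.ofReal (Real.exp (lam * birk f 0 (N' j) x) / Zmn σ f lam 0 (N' j))))
          atTop (𝓝 (∫ x, g x ∂μ'))) →
      μ ≪ μ' ∧ μ' ≪ μ) := by
  have := nonempty_of_isProbabilityMeasure_pi σ
  set K := Real.exp (|lam| * D)
  have hK : 1 ≤ K := Real.one_le_exp (mul_nonneg (abs_nonneg lam) hH2.nonneg)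
  have hC : 1 ≤ K * (K * K) :=
    one_le_mul_of_one_le_of_one_le hK (one_le_mul_of_one_le_of_one_le hK hK)
  have hμ := withinFactor_measure_cyl_of_tendsto hσ hfc hH2 lam hN hlim
  refine ⟨⟨K * (K * K), hC, fun n hn x =>
    ⟨(hμ n hn x).inv_mul_le (by positivity), (hμ n hn x).1⟩⟩, fun μ' _ N' hN' hlim' => ?_⟩
  have hμ' := withinFactor_measure_cyl_of_tendsto hσ hfc hH2 lam hN' hlim'
  exact ⟨absolutelyContinuous_of_withinFactor_cyl (by positivity) _ hμ hμ',
    absolutelyContinuous_of_withinFactor_cyl (by positivity) _ hμ' hμ⟩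

/-- Gibbs property of weak limits: under (H2), any weak limit `μ` of the
measures `μ_{n,λ} = (exp(λ S_n f)/Z_n(λ)) dσ` along a subsequence satisfies the Gibbs
property, and any two weak limit points are equivalent. -/
theorem gibbs_property_of_weak_limits {S : Type*} [Fintype S] [TopologicalSpace S]
    [DiscreteTopology S] [MeasurableSpace S] [BorelSpace S] (hq : 2 ≤ Fintype.card S)
    (σ : Measure (ℕ → S)) [IsProbabilityMeasure σ]
    (hσ : ∀ (m : ℕ) (a : Fin m → S), σ (cyl a) = (Fintype.card S : ℝ≥0∞)⁻¹ ^ m)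
    (f : ℕ → (ℕ → S) → ℝ) (hfc : ∀ n, Continuous (f n))
    (M : ℝ) (hfb : ∀ n x, |f n x| ≤ M)
    (D : ℝ) (hH2 : H2 f D) (lam : ℝ)
    (N : ℕ → ℕ) (hN : StrictMono N)
    (μ : Measure (ℕ → S)) [IsProbabilityMeasure μ]
    (hlim : ∀ g : BoundedContinuousFunction (ℕ → S) ℝ,
      Tendsto (fun j => ∫ x, g x
          ∂(σ.withDensity fun x =>
              ENNReal.ofReal (Real.exp (lam * birk f 0 (N j) x) / Zmn σ f lam 0 (N j))))
        atTop (𝓝 (∫ x, g x ∂μ))) :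
    (∃ C : ℝ, 1 ≤ C ∧ ∀ n : ℕ, 1 ≤ n → ∀ x : ℕ → S,
      C⁻¹ * (Real.exp (lam * birk f 0 n x) / ((Fintype.card S : ℝ) ^ n * Zmn σ f lam 0 n))
          ≤ (μ (cyl fun i : Fin n => x i)).toReal ∧
      (μ (cyl fun i : Fin n => x i)).toReal
          ≤ C * (Real.exp (lam * birk f 0 n x) / ((Fintype.card S : ℝ) ^ n * Zmn σ f lam 0 n))) ∧
    (∀ (μ' : Measure (ℕ → S)), IsProbabilityMeasure μ' → ∀ N' : ℕ → ℕ, StrictMono N' →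
      (∀ g : BoundedContinuousFunction (ℕ → S) ℝ,
        Tendsto (fun j => ∫ x, g x
            ∂(σ.withDensity fun x =>
                ENNReal.ofReal (Real.exp (lam * birk f 0 (N' j) x) / Zmn σ f lam 0 (N' j))))
          atTop (𝓝 (∫ x, g x ∂μ'))) →
      μ ≪ μ' ∧ μ' ≪ μ) :=
  gibbs_property_of_weak_limits_general σ hσ f hfc D hH2 lam N hN μ hlim
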